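/- If B is a γ-contraction on a complete normed space (γ ∈ (0,1)) and λ ∈ [0,1), then the operator B_λ = (1-λ) Σ_{n≥0} λ^n B^{n+1} is a ((1-λ)γ/(1-λγ))-contraction. -/

import Mathlib

/-!
Orbits of a `γ`-contraction `B` stay in the ball of radius `max ‖x‖ (‖B 0‖ / (1 - γ))`, so the
series defining `B_λ` converges. Since `‖B^[n+1] x - B^[n+1] y‖ ≤ γ^(n+1) ‖x - y‖`, subtracting the
two series termwise gives
`‖B_λ x - B_λ y‖ ≤ (1 - λ) ∑ λ^n γ^(n+1) ‖x - y‖ = (1 - λ) γ / (1 - λγ) ‖x - y‖`.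
-/

section Contraction

variable {X : Type*} [NormedAddCommGroup X] {B : X → X} {γ : ℝ}

lemma norm_iterate_sub_le (hγ : 0 ≤ γ) (hB : ∀ x y : X, ‖B x - B y‖ ≤ γ * ‖x - y‖)
    (n : ℕ) (x y : X) : ‖B^[n] x - B^[n] y‖ ≤ γ ^ n * ‖x - y‖ := by
  induction n with
  | zero => simp
  | succ n ih =>
    rw [Function.iterate_succ_apply', Function.iterate_succ_apply', pow_succ']
    calc ‖B (B^[n] x) - B (B^[n] y)‖ ≤ γ * ‖B^[n] x - B^[n] y‖ := hB _ _
      _ ≤ γ * (γ ^ n * ‖x - y‖) := mul_le_mul_of_nonneg_left ih hγ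
      _ = γ * γ ^ n * ‖x - y‖ := by ring

lemma norm_apply_le_of_norm_le (hγ : 0 ≤ γ) (hB : ∀ x y : X, ‖B x - B y‖ ≤ γ * ‖x - y‖)
    {M : ℝ} {y : X} (hy : ‖y‖ ≤ M) (hB0 : ‖B 0‖ ≤ (1 - γ) * M) : ‖B y‖ ≤ M := by
  have hγy : γ * ‖y‖ ≤ γ * M := mul_le_mul_of_nonneg_left hy hγ
  calc ‖B y‖ ≤ ‖B y - B 0‖ + ‖B 0‖ := norm_le_norm_sub_add _ _
    _ ≤ γ * ‖y‖ + ‖B 0‖ := by simpa using add_le_add_right (hB y 0) ‖B 0‖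
    _ ≤ M := by linarith

lemma norm_iterate_le_max (hγ0 : 0 ≤ γ) (hγ1 : γ < 1)
    (hB : ∀ x y : X, ‖B x - B y‖ ≤ γ * ‖x - y‖) (n : ℕ) (x : X) :
    ‖B^[n] x‖ ≤ max ‖x‖ (‖B 0‖ / (1 - γ)) := by
  have hB0 : ‖B 0‖ ≤ (1 - γ) * max ‖x‖ (‖B 0‖ / (1 - γ)) := by
    rw [← div_le_iff₀' (by linarith)]
    exact le_max_right _ _
  induction n with
  | zero => exact le_max_left _ _
  | succ n ih =>
    rw [Function.iterate_succ_apply']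
    exact norm_apply_le_of_norm_le hγ0 hB ih hB0

end Contraction

lemma summable_pow_smul_of_norm_le {X : Type*} [NormedAddCommGroup X] [NormedSpace ℝ X]
    [CompleteSpace X] {lam C : ℝ} (hlam0 : 0 ≤ lam) (hlam1 : lam < 1) {f : ℕ → X}
    (hf : ∀ n, ‖f n‖ ≤ C) : Summable (fun n ↦ lam ^ n • f n) := by
  refine .of_norm_bounded ((summable_geometric_of_lt_one hlam0 hlam1).mul_right C) fun n ↦ ?_
  rw [norm_smul, Real.norm_of_nonneg (pow_nonneg hlam0 n)]
  exact mul_le_mul_of_nonneg_left (hf n) (pow_nonneg hlam0 n)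

section GeometricAverage

variable {X : Type*} [NormedAddCommGroup X] [NormedSpace ℝ X] [CompleteSpace X] {B : X → X}
  {γ lam : ℝ}

lemma summable_pow_smul_iterate (hγ0 : 0 ≤ γ) (hγ1 : γ < 1) (hlam0 : 0 ≤ lam) (hlam1 : lam < 1)
    (hB : ∀ x y : X, ‖B x - B y‖ ≤ γ * ‖x - y‖) (x : X) :
    Summable (fun n : ℕ ↦ lam ^ n • B^[n + 1] x) :=
  summable_pow_smul_of_norm_le hlam0 hlam1 fun n ↦ norm_iterate_le_max hγ0 hγ1 hB (n + 1) x

lemma norm_tsum_pow_smul_iterate_sub_le (hγ0 : 0 ≤ γ) (hγ1 : γ < 1) (hlam0 : 0 ≤ lam)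
    (hlam1 : lam < 1) (hB : ∀ x y : X, ‖B x - B y‖ ≤ γ * ‖x - y‖) (x y : X) :
    ‖∑' n : ℕ, lam ^ n • B^[n + 1] x - ∑' n : ℕ, lam ^ n • B^[n + 1] y‖
      ≤ γ / (1 - lam * γ) * ‖x - y‖ := by
  have hlamγ1 : lam * γ < 1 := by nlinarith
  have hgeom : HasSum (fun n : ℕ ↦ γ * (lam * γ) ^ n * ‖x - y‖) (γ / (1 - lam * γ) * ‖x - y‖) :=
    ((hasSum_geometric_of_lt_one (mul_nonneg hlam0 hγ0) hlamγ1).mul_left γ).mul_right _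
  rw [← (summable_pow_smul_iterate hγ0 hγ1 hlam0 hlam1 hB x).tsum_sub
    (summable_pow_smul_iterate hγ0 hγ1 hlam0 hlam1 hB y)]
  refine tsum_of_norm_bounded hgeom fun n ↦ ?_
  rw [← smul_sub, norm_smul, Real.norm_of_nonneg (pow_nonneg hlam0 n)]
  calc lam ^ n * ‖B^[n + 1] x - B^[n + 1] y‖ ≤ lam ^ n * (γ ^ (n + 1) * ‖x - y‖) :=
        mul_le_mul_of_nonneg_left (norm_iterate_sub_le hγ0 hB _ _ _) (pow_nonneg hlam0 n)
    _ = γ * (lam * γ) ^ n * ‖x - y‖ := by ring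

end GeometricAverage

theorem stmt_0
    {X : Type*} [NormedAddCommGroup X] [NormedSpace ℝ X] [CompleteSpace X]
    (B : X → X) (γ lam : ℝ) (hγ0 : 0 < γ) (hγ1 : γ < 1)
    (hlam0 : 0 ≤ lam) (hlam1 : lam < 1)
    (hB : ∀ x y : X, ‖B x - B y‖ ≤ γ * ‖x - y‖)
    (Blam : X → X)
    (hBlam : ∀ x : X, Blam x = (1 - lam) • ∑' n : ℕ, lam ^ n • B^[n + 1] x) :
    ∀ x y : X, ‖Blam x - Blam y‖ ≤ ((1 - lam) * γ / (1 - lam * γ)) * ‖x - y‖ := by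
  intro x y
  rw [hBlam, hBlam, ← smul_sub, norm_smul, Real.norm_of_nonneg (by linarith), mul_div_assoc,
    mul_assoc]
  exact mul_le_mul_of_nonneg_left
    (norm_tsum_pow_smul_iterate_sub_le hγ0.le hγ1 hlam0 hlam1 hB x y) (by linarith)
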